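/- arXiv:2011.07848 — 2 statements merged into one kernel-verified Lean document; each statement's English description precedes it below -/
import Mathlib

section
/- Let c > 0, γ > 0, m > 0, and M > 0 be real numbers. Then there exist constants C > 0 and R > 0 such that every τ ∈ ℂ with |Im τ| ≤ M and Re τ ≥ R satisfying the characteristic equation 2m·τ²·sinh τ·sin τ + τ·(cosh τ·sin τ − sinh τ·cos τ) = (i·c·τ² + γ)·[1 + cosh τ·cos τ − m·τ·(cosh τ·sin τ − sinh τ·cos τ)] also satisfies |sin τ − cos τ| ≤ C/|τ| and |sin(2τ) − 1| ≤ C/|τ|. -/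
open Complex

/-- Bound on `|sin τ|` in a horizontal strip. -/
lemma abs_sin_le_strip {τ : ℂ} {M : ℝ} (h : |τ.im| ≤ M) :
    ‖Complex.sin τ‖ ≤ Real.exp M := by
  have hy1 : τ.im ≤ M := (abs_le.mp h).2
  have hy2 : -M ≤ τ.im := (abs_le.mp h).1
  have hsin : (2 : ℂ) * Complex.sin τ = (Complex.exp (-τ * I) - Complex.exp (τ * I)) * I :=
    Complex.two_sin τ
  have habs : 2 * ‖Complex.sin τ‖
      = ‖Complex.exp (-τ * I) - Complex.exp (τ * I)‖ := by
    have := congrArg (‖·‖) hsin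
    simpa [norm_mul, Complex.norm_two, Complex.norm_I] using this
  have h2 : ‖Complex.exp (-τ * I) - Complex.exp (τ * I)‖
      ≤ ‖Complex.exp (-τ * I)‖ + ‖Complex.exp (τ * I)‖ :=
    norm_sub_le _ _
  have e1 : ‖Complex.exp (-τ * I)‖ = Real.exp τ.im := by
    rw [Complex.norm_exp]; congr 1; simp
  have e2 : ‖Complex.exp (τ * I)‖ = Real.exp (-τ.im) := by
    rw [Complex.norm_exp]; congr 1; simp
  have b1 : Real.exp τ.im ≤ Real.exp M := Real.exp_le_exp.mpr hy1
  have b2 : Real.exp (-τ.im) ≤ Real.exp M := Real.exp_le_exp.mpr (by linarith)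
  linarith [habs, h2, e1 ▸ b1, e2 ▸ b2]

/-- Bound on `|cos τ|` in a horizontal strip. -/
lemma abs_cos_le_strip {τ : ℂ} {M : ℝ} (h : |τ.im| ≤ M) :
    ‖Complex.cos τ‖ ≤ Real.exp M := by
  have hy1 : τ.im ≤ M := (abs_le.mp h).2
  have hy2 : -M ≤ τ.im := (abs_le.mp h).1
  have hcos : (2 : ℂ) * Complex.cos τ = Complex.exp (τ * I) + Complex.exp (-τ * I) :=
    Complex.two_cos τ
  have habs : 2 * ‖Complex.cos τ‖
      = ‖Complex.exp (τ * I) + Complex.exp (-τ * I)‖ := by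
    have := congrArg (‖·‖) hcos
    simpa [norm_mul, Complex.norm_two] using this
  have h2 : ‖Complex.exp (τ * I) + Complex.exp (-τ * I)‖
      ≤ ‖Complex.exp (τ * I)‖ + ‖Complex.exp (-τ * I)‖ :=
    norm_add_le _ _
  have e1 : ‖Complex.exp (-τ * I)‖ = Real.exp τ.im := by
    rw [Complex.norm_exp]; congr 1; simp
  have e2 : ‖Complex.exp (τ * I)‖ = Real.exp (-τ.im) := by
    rw [Complex.norm_exp]; congr 1; simp
  have b1 : Real.exp τ.im ≤ Real.exp M := Real.exp_le_exp.mpr hy1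
  have b2 : Real.exp (-τ.im) ≤ Real.exp M := Real.exp_le_exp.mpr (by linarith)
  linarith [habs, h2, e1 ▸ b1, e2 ▸ b2]

set_option maxHeartbeats 2000000 in
/-- localization of the large roots of the tip-mass characteristic
equation in a horizontal strip: such roots satisfy `|sin τ − cos τ| ≤ C/|τ|` and
`|sin(2τ) − 1| ≤ C/|τ|`. -/
theorem stmt_16 (c γ m M : ℝ) (hc : 0 < c) (hγ : 0 < γ) (hm : 0 < m) (hM : 0 < M) :
    ∃ C : ℝ, 0 < C ∧ ∃ R : ℝ, 0 < R ∧ ∀ τ : ℂ,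
      |τ.im| ≤ M → R ≤ τ.re →
      (2 * (m : ℂ) * τ ^ 2 * Complex.sinh τ * Complex.sin τ
          + τ * (Complex.cosh τ * Complex.sin τ - Complex.sinh τ * Complex.cos τ)
        = (Complex.I * (c : ℂ) * τ ^ 2 + (γ : ℂ))
            * (1 + Complex.cosh τ * Complex.cos τ
              - (m : ℂ) * τ * (Complex.cosh τ * Complex.sin τ
                - Complex.sinh τ * Complex.cos τ))) →
      ‖Complex.sin τ - Complex.cos τ‖ ≤ C / ‖τ‖ ∧
      ‖Complex.sin (2 * τ) - 1‖ ≤ C / ‖τ‖ := by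
  set E : ℝ := Real.exp M with hEdef
  have hE1 : 1 ≤ E := Real.one_le_exp hM.le
  have hE0 : 0 < E := lt_of_lt_of_le one_pos hE1
  set K₁ : ℝ := 2 * (c + γ) * E + 2 * m * E with hK1def
  have hK₁0 : 0 < K₁ := by positivity
  set K₂ : ℝ := 2 * K₁ / (c * m) with hK2def
  have hK₂0 : 0 < K₂ := by positivity
  set C₁ : ℝ := 2 * K₂ + 4 * E with hC1def
  have hC₁0 : 0 < C₁ := by positivity
  refine ⟨C₁ + C₁ ^ 2, by positivity, 1 + M + Real.sqrt (2 * (m * γ + 1) / (c * m)),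
    by positivity, ?_⟩
  intro τ him hre heq
  have hsq : 0 ≤ 2 * (m * γ + 1) / (c * m) := by positivity
  have hx1 : 1 ≤ τ.re := by
    have := Real.sqrt_nonneg (2 * (m * γ + 1) / (c * m)); linarith
  have hx0 : 0 ≤ τ.re := by linarith
  have hxM : M ≤ τ.re := by
    have := Real.sqrt_nonneg (2 * (m * γ + 1) / (c * m)); linarith
  have hsqrt : Real.sqrt (2 * (m * γ + 1) / (c * m)) ≤ τ.re := by linarith
  have hx2 : 2 * (m * γ + 1) / (c * m) ≤ τ.re ^ 2 := by
    have h1 : Real.sqrt (2 * (m * γ + 1) / (c * m)) ^ 2 ≤ τ.re ^ 2 :=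
      pow_le_pow_left₀ (Real.sqrt_nonneg _) hsqrt 2
    rwa [Real.sq_sqrt hsq] at h1
  -- basic abs facts
  have habs_lo : τ.re ≤ ‖τ‖ :=
    le_trans (le_abs_self _) (Complex.abs_re_le_norm τ)
  have hτ1 : 1 ≤ ‖τ‖ := le_trans hx1 habs_lo
  have hτ0 : 0 < ‖τ‖ := lt_of_lt_of_le one_pos hτ1
  have hτsq1 : 1 ≤ ‖τ‖ ^ 2 := by nlinarith
  have hτsq0 : 0 < ‖τ‖ ^ 2 := by positivity
  have habs_hi : ‖τ‖ ≤ 2 * τ.re := by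
    have h1 : ‖τ‖ ≤ |τ.re| + |τ.im| := Complex.norm_le_abs_re_add_abs_im τ
    have h2 : |τ.re| = τ.re := abs_of_nonneg hx0
    linarith
  have hsin : ‖Complex.sin τ‖ ≤ E := abs_sin_le_strip him
  have hcos : ‖Complex.cos τ‖ ≤ E := abs_cos_le_strip him
  have hexpabs : ‖Complex.exp τ‖ = Real.exp τ.re := Complex.norm_exp τ
  have hexpnabs : ‖Complex.exp (-τ)‖ = Real.exp (-τ.re) := by
    rw [Complex.norm_exp, Complex.neg_re]
  have hex1 : 1 ≤ Real.exp τ.re := Real.one_le_exp hx0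
  have hex0 : 0 < Real.exp τ.re := Real.exp_pos _
  have hexneg : Real.exp (-τ.re) ≤ Real.exp τ.re := Real.exp_le_exp.mpr (by linarith)
  -- cosh/sinh in terms of exp
  have hcosh : Complex.cosh τ = (Complex.exp τ + Complex.exp (-τ)) / 2 := by
    have h1 := Complex.cosh_add_sinh τ
    have h2 := Complex.cosh_sub_sinh τ
    linear_combination (h1 + h2) / 2
  have hsinh : Complex.sinh τ = (Complex.exp τ - Complex.exp (-τ)) / 2 := by
    have h1 := Complex.cosh_add_sinh τ
    have h2 := Complex.cosh_sub_sinh τ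
    linear_combination (h1 - h2) / 2
  have hchabs : ‖Complex.cosh τ‖ ≤ Real.exp τ.re := by
    rw [hcosh, norm_div, Complex.norm_two]
    have h1 : ‖Complex.exp τ + Complex.exp (-τ)‖
        ≤ ‖Complex.exp τ‖ + ‖Complex.exp (-τ)‖ :=
      norm_add_le _ _
    rw [hexpabs, hexpnabs] at h1
    linarith
  have hshabs : ‖Complex.sinh τ‖ ≤ Real.exp τ.re := by
    rw [hsinh, norm_div, Complex.norm_two]
    have h1 : ‖Complex.exp τ - Complex.exp (-τ)‖
        ≤ ‖Complex.exp τ‖ + ‖Complex.exp (-τ)‖ :=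
      norm_sub_le _ _
    rw [hexpabs, hexpnabs] at h1
    linarith
  set A : ℂ := Complex.cosh τ * Complex.sin τ - Complex.sinh τ * Complex.cos τ with hAdef
  -- rearranged characteristic equation
  have hA : τ * (Complex.I * c * m * τ ^ 2 + ((m : ℂ) * γ + 1)) * A
      = (Complex.I * c * τ ^ 2 + γ) * (1 + Complex.cosh τ * Complex.cos τ)
        - 2 * m * τ ^ 2 * Complex.sinh τ * Complex.sin τ := by
    rw [hAdef]; linear_combination heq
  -- bound the RHS
  have hRHS : ‖(Complex.I * c * τ ^ 2 + γ) * (1 + Complex.cosh τ * Complex.cos τ)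
        - 2 * m * τ ^ 2 * Complex.sinh τ * Complex.sin τ‖
      ≤ K₁ * ‖τ‖ ^ 2 * Real.exp τ.re := by
    have h1 : ‖Complex.I * c * τ ^ 2 + γ‖ ≤ (c + γ) * ‖τ‖ ^ 2 := by
      refine (norm_add_le _ _).trans ?_
      have e1 : ‖Complex.I * c * τ ^ 2‖ = c * ‖τ‖ ^ 2 := by
        rw [norm_mul, norm_mul, norm_pow, Complex.norm_I, Complex.norm_real, Real.norm_eq_abs, abs_of_pos hc,
          one_mul]
      have e2 : ‖(γ : ℂ)‖ = γ := by
        rw [Complex.norm_real, Real.norm_eq_abs, abs_of_pos hγ]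
      rw [e1, e2]
      have : γ * 1 ≤ γ * ‖τ‖ ^ 2 := mul_le_mul_of_nonneg_left hτsq1 hγ.le
      linarith
    have h2 : ‖1 + Complex.cosh τ * Complex.cos τ‖ ≤ 2 * E * Real.exp τ.re := by
      refine (norm_add_le _ _).trans ?_
      rw [norm_one, norm_mul]
      have h3 : ‖Complex.cosh τ‖ * ‖Complex.cos τ‖
          ≤ Real.exp τ.re * E :=
        mul_le_mul hchabs hcos (norm_nonneg _) hex0.le
      have h4 : 1 ≤ E * Real.exp τ.re := one_le_mul_of_one_le_of_one_le hE1 hex1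
      nlinarith
    have h3 : ‖2 * m * τ ^ 2 * Complex.sinh τ * Complex.sin τ‖
        ≤ 2 * m * ‖τ‖ ^ 2 * (Real.exp τ.re * E) := by
      rw [norm_mul, norm_mul, norm_mul, norm_mul, norm_pow, Complex.norm_two]
      have e2 : ‖(m : ℂ)‖ = m := by rw [Complex.norm_real, Real.norm_eq_abs, abs_of_pos hm]
      rw [e2]
      have h5 : ‖Complex.sinh τ‖ * ‖Complex.sin τ‖
          ≤ Real.exp τ.re * E :=
        mul_le_mul hshabs hsin (norm_nonneg _) hex0.le
      have h6 : (0:ℝ) ≤ 2 * m * ‖τ‖ ^ 2 := by positivity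
      calc 2 * m * ‖τ‖ ^ 2 * ‖Complex.sinh τ‖ * ‖Complex.sin τ‖
          = 2 * m * ‖τ‖ ^ 2
            * (‖Complex.sinh τ‖ * ‖Complex.sin τ‖) := by ring
        _ ≤ 2 * m * ‖τ‖ ^ 2 * (Real.exp τ.re * E) :=
            mul_le_mul_of_nonneg_left h5 h6
    have h4 : ‖(Complex.I * c * τ ^ 2 + γ) * (1 + Complex.cosh τ * Complex.cos τ)‖
        ≤ (c + γ) * ‖τ‖ ^ 2 * (2 * E * Real.exp τ.re) := by
      rw [norm_mul]
      exact mul_le_mul h1 h2 (norm_nonneg _) (by positivity)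
    calc ‖(Complex.I * c * τ ^ 2 + γ) * (1 + Complex.cosh τ * Complex.cos τ)
          - 2 * m * τ ^ 2 * Complex.sinh τ * Complex.sin τ‖
        ≤ ‖(Complex.I * c * τ ^ 2 + γ) * (1 + Complex.cosh τ * Complex.cos τ)‖
          + ‖2 * m * τ ^ 2 * Complex.sinh τ * Complex.sin τ‖ :=
          norm_sub_le _ _
      _ ≤ (c + γ) * ‖τ‖ ^ 2 * (2 * E * Real.exp τ.re)
          + 2 * m * ‖τ‖ ^ 2 * (Real.exp τ.re * E) := add_le_add h4 h3
      _ = K₁ * ‖τ‖ ^ 2 * Real.exp τ.re := by rw [hK1def]; ring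
  -- lower bound on the coefficient
  have hcoef : c * m / 2 * ‖τ‖ ^ 2
      ≤ ‖(Complex.I * c * m * τ ^ 2 + ((m : ℂ) * γ + 1))‖ := by
    have e1 : ‖Complex.I * c * m * τ ^ 2‖ = c * m * ‖τ‖ ^ 2 := by
      rw [norm_mul, norm_mul, norm_mul, norm_pow, Complex.norm_I, Complex.norm_real, Real.norm_eq_abs,
        Complex.norm_real, Real.norm_eq_abs, abs_of_pos hc, abs_of_pos hm, one_mul]
    have e2 : ‖((m : ℂ) * γ + 1)‖ ≤ m * γ + 1 := by
      refine (norm_add_le _ _).trans ?_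
      rw [norm_mul, norm_one, Complex.norm_real, Real.norm_eq_abs, Complex.norm_real, Real.norm_eq_abs, abs_of_pos hm,
        abs_of_pos hγ]
    have htr : ‖Complex.I * c * m * τ ^ 2‖
        ≤ ‖Complex.I * c * m * τ ^ 2 + ((m:ℂ) * γ + 1)‖
          + ‖((m : ℂ) * γ + 1)‖ := by
      have h := norm_sub_le
        (Complex.I * (c:ℂ) * m * τ ^ 2 + ((m:ℂ) * γ + 1)) ((m:ℂ) * γ + 1)
      have e3 : Complex.I * (c:ℂ) * m * τ ^ 2 + ((m:ℂ) * γ + 1) - ((m:ℂ) * γ + 1)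
          = Complex.I * (c:ℂ) * m * τ ^ 2 := by ring
      rw [e3] at h
      exact h
    have hτre2 : 2 * (m * γ + 1) / (c * m) ≤ ‖τ‖ ^ 2 :=
      hx2.trans (pow_le_pow_left₀ hx0 habs_lo 2)
    have hsmall : m * γ + 1 ≤ c * m / 2 * ‖τ‖ ^ 2 := by
      have hcm : 0 < c * m := by positivity
      rw [div_le_iff₀ hcm] at hτre2
      linarith
    have := e1 ▸ htr
    linarith
  -- combine: |τ| * |A| ≤ K₂ * exp τ.re
  have hAbound : ‖τ‖ * ‖A‖ ≤ K₂ * Real.exp τ.re := by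
    have habsEq : ‖τ‖ * ‖(Complex.I * c * m * τ ^ 2 + ((m : ℂ) * γ + 1))‖
        * ‖A‖
        = ‖(Complex.I * c * τ ^ 2 + γ) * (1 + Complex.cosh τ * Complex.cos τ)
            - 2 * m * τ ^ 2 * Complex.sinh τ * Complex.sin τ‖ := by
      rw [← hA, norm_mul, norm_mul]
    have key : ‖τ‖ * (c * m / 2 * ‖τ‖ ^ 2) * ‖A‖
        ≤ K₁ * ‖τ‖ ^ 2 * Real.exp τ.re := by
      calc ‖τ‖ * (c * m / 2 * ‖τ‖ ^ 2) * ‖A‖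
          ≤ ‖τ‖ * ‖(Complex.I * c * m * τ ^ 2 + ((m : ℂ) * γ + 1))‖
            * ‖A‖ :=
            mul_le_mul_of_nonneg_right
              (mul_le_mul_of_nonneg_left hcoef (norm_nonneg τ))
              (norm_nonneg A)
        _ = _ := habsEq
        _ ≤ _ := hRHS
    have hdiv : c * m / 2 * (‖τ‖ * ‖A‖) ≤ K₁ * Real.exp τ.re := by
      have h' : c * m / 2 * (‖τ‖ * ‖A‖) * ‖τ‖ ^ 2
          ≤ K₁ * Real.exp τ.re * ‖τ‖ ^ 2 := by nlinarith [key]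
      exact le_of_mul_le_mul_right h' hτsq0
    rw [hK2def, div_mul_eq_mul_div, le_div_iff₀ (by positivity : (0:ℝ) < c * m)]
    nlinarith [hdiv]
  -- express sin - cos via A
  have hdiff : Complex.exp τ * (Complex.sin τ - Complex.cos τ)
      = 2 * A - Complex.exp (-τ) * (Complex.sin τ + Complex.cos τ) := by
    rw [hAdef, hcosh, hsinh]; ring
  have hdiffabs : Real.exp τ.re * ‖Complex.sin τ - Complex.cos τ‖
      ≤ 2 * ‖A‖ + Real.exp (-τ.re) * (2 * E) := by
    have h1 : ‖Complex.exp τ * (Complex.sin τ - Complex.cos τ)‖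
        = Real.exp τ.re * ‖Complex.sin τ - Complex.cos τ‖ := by
      rw [norm_mul, hexpabs]
    have hsum : ‖Complex.sin τ + Complex.cos τ‖ ≤ 2 * E := by
      refine (norm_add_le _ _).trans ?_; linarith
    have h2 : ‖2 * A - Complex.exp (-τ) * (Complex.sin τ + Complex.cos τ)‖
        ≤ 2 * ‖A‖ + Real.exp (-τ.re) * (2 * E) := by
      refine (norm_sub_le _ _).trans ?_
      rw [norm_mul, norm_mul, Complex.norm_two, hexpnabs]
      have h3 : Real.exp (-τ.re) * ‖Complex.sin τ + Complex.cos τ‖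
          ≤ Real.exp (-τ.re) * (2 * E) :=
        mul_le_mul_of_nonneg_left hsum (Real.exp_pos _).le
      linarith
    rw [← h1, hdiff]; exact h2
  -- key bound : |τ| * |sin τ - cos τ| ≤ C₁
  have hxexp : τ.re ≤ Real.exp τ.re := by linarith [Real.add_one_le_exp τ.re]
  have hmain : ‖τ‖ * ‖Complex.sin τ - Complex.cos τ‖ ≤ C₁ := by
    have hstep : ‖τ‖ * (Real.exp τ.re * ‖Complex.sin τ - Complex.cos τ‖)
        ≤ ‖τ‖ * (2 * ‖A‖) + ‖τ‖ * (Real.exp (-τ.re) * (2 * E)) := by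
      have h := mul_le_mul_of_nonneg_left hdiffabs (norm_nonneg τ)
      calc ‖τ‖ * (Real.exp τ.re * ‖Complex.sin τ - Complex.cos τ‖)
          ≤ ‖τ‖ * (2 * ‖A‖ + Real.exp (-τ.re) * (2 * E)) := h
        _ = ‖τ‖ * (2 * ‖A‖)
            + ‖τ‖ * (Real.exp (-τ.re) * (2 * E)) := by ring
    have h1 : ‖τ‖ * (2 * ‖A‖) ≤ 2 * K₂ * Real.exp τ.re := by
      nlinarith [hAbound]
    have h2 : ‖τ‖ * (Real.exp (-τ.re) * (2 * E)) ≤ 4 * E * Real.exp τ.re := by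
      have hinvpos : 0 < (Real.exp τ.re)⁻¹ := by positivity
      have hEexp : Real.exp (-τ.re) = (Real.exp τ.re)⁻¹ := by
        rw [Real.exp_neg]
      rw [hEexp]
      have step1 : ‖τ‖ * ((Real.exp τ.re)⁻¹ * (2 * E))
          ≤ 2 * τ.re * ((Real.exp τ.re)⁻¹ * (2 * E)) :=
        mul_le_mul_of_nonneg_right habs_hi (by positivity)
      refine step1.trans ?_
      have h7 : 2 * τ.re * ((Real.exp τ.re)⁻¹ * (2 * E))
          = 4 * E * (τ.re * (Real.exp τ.re)⁻¹) := by ring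
      rw [h7]
      have h8 : τ.re * (Real.exp τ.re)⁻¹ ≤ 1 := by
        rw [← div_eq_mul_inv, div_le_one hex0]; exact hxexp
      calc 4 * E * (τ.re * (Real.exp τ.re)⁻¹) ≤ 4 * E * 1 :=
            mul_le_mul_of_nonneg_left h8 (by positivity)
        _ ≤ 4 * E * Real.exp τ.re := by nlinarith
    have h9 : ‖τ‖ * ‖Complex.sin τ - Complex.cos τ‖ * Real.exp τ.re
        ≤ C₁ * Real.exp τ.re := by
      have : ‖τ‖ * (Real.exp τ.re * ‖Complex.sin τ - Complex.cos τ‖)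
          ≤ (2 * K₂ + 4 * E) * Real.exp τ.re := by linarith
      rw [hC1def]
      nlinarith [this]
    exact le_of_mul_le_mul_right h9 hex0
  have hdnn : 0 ≤ ‖Complex.sin τ - Complex.cos τ‖ := norm_nonneg _
  constructor
  · rw [le_div_iff₀ hτ0]
    nlinarith [hmain, sq_nonneg C₁]
  · have hid : Complex.sin (2 * τ) - 1 = -(Complex.sin τ - Complex.cos τ) ^ 2 := by
      have h1 := Complex.sin_two_mul τ
      have h2 := Complex.sin_sq_add_cos_sq τ
      linear_combination h1 + h2
    rw [hid, norm_neg, norm_pow, le_div_iff₀ hτ0]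
    have e1 : ‖τ‖ ≤ ‖τ‖ ^ 2 := by nlinarith
    have e2 : ‖Complex.sin τ - Complex.cos τ‖ ^ 2 * ‖τ‖
        ≤ ‖Complex.sin τ - Complex.cos τ‖ ^ 2 * ‖τ‖ ^ 2 :=
      mul_le_mul_of_nonneg_left e1 (sq_nonneg _)
    have e3 : ‖Complex.sin τ - Complex.cos τ‖ ^ 2 * ‖τ‖ ^ 2
        = (‖τ‖ * ‖Complex.sin τ - Complex.cos τ‖) ^ 2 := by ring
    have e4 : (‖τ‖ * ‖Complex.sin τ - Complex.cos τ‖) ^ 2 ≤ C₁ ^ 2 :=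
      pow_le_pow_left₀ (by positivity) hmain 2
    linarith [hC₁0]
end

section
/- Let c > 0, γ > 0, m > 0, α > 0, and β > 0 be real numbers, and let τ ∈ ℂ with i·c·τ² + γ ≠ 0 satisfy the characteristic equation 2m·τ²·sinh τ·sin τ + τ·(cosh τ·sin τ − sinh τ·cos τ) = (i·c·τ² + γ)·[1 + cosh τ·cos τ − m·τ·(cosh τ·sin τ − sinh τ·cos τ)]. Define φ : [0,1] → ℂ by φ(x) = (sinh τ + sin τ)·(cosh(τx) − cos(τx)) + (2τ·sin τ/(i·c·τ² + γ) − (cosh τ + cos τ))·sinh(τx) + ((cosh τ + cos τ) + 2τ·sinh τ/(i·c·τ² + γ))·sin(τx). Then α·φ(1) − β·φ'''(1) = 2K, where K = [α·(cosh τ·sin τ − sinh τ·cos τ) + β·τ³·(1 + cosh τ·cos τ)] + (τ/(i·c·τ² + γ))·[2α·sinh τ·sin τ − β·τ³·(cosh τ·sin τ − sinh τ·cos τ)]. -/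
open Complex Set

private lemma hd_cosh (τ : ℂ) (x : ℝ) :
    HasDerivAt (fun y : ℝ => Complex.cosh (τ * y)) (τ * Complex.sinh (τ * x)) x := by
  have h : HasDerivAt (fun z : ℂ => Complex.cosh (τ * z)) (τ * Complex.sinh (τ * x)) (x : ℂ) := by
    exact ((Complex.hasDerivAt_cosh (τ * x)).comp (x:ℂ) ((hasDerivAt_id (x:ℂ)).const_mul τ)).congr_deriv (by ring)
  exact h.comp_ofReal

private lemma hd_sinh (τ : ℂ) (x : ℝ) :
    HasDerivAt (fun y : ℝ => Complex.sinh (τ * y)) (τ * Complex.cosh (τ * x)) x := by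
  have h : HasDerivAt (fun z : ℂ => Complex.sinh (τ * z)) (τ * Complex.cosh (τ * x)) (x : ℂ) := by
    exact ((Complex.hasDerivAt_sinh (τ * x)).comp (x:ℂ) ((hasDerivAt_id (x:ℂ)).const_mul τ)).congr_deriv (by ring)
  exact h.comp_ofReal

private lemma hd_cos (τ : ℂ) (x : ℝ) :
    HasDerivAt (fun y : ℝ => Complex.cos (τ * y)) (-(τ * Complex.sin (τ * x))) x := by
  have h : HasDerivAt (fun z : ℂ => Complex.cos (τ * z)) (-(τ * Complex.sin (τ * x))) (x : ℂ) := by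
    exact ((Complex.hasDerivAt_cos (τ * x)).comp (x:ℂ) ((hasDerivAt_id (x:ℂ)).const_mul τ)).congr_deriv (by ring)
  exact h.comp_ofReal

private lemma hd_sin (τ : ℂ) (x : ℝ) :
    HasDerivAt (fun y : ℝ => Complex.sin (τ * y)) (τ * Complex.cos (τ * x)) x := by
  have h : HasDerivAt (fun z : ℂ => Complex.sin (τ * z)) (τ * Complex.cos (τ * x)) (x : ℂ) := by
    exact ((Complex.hasDerivAt_sin (τ * x)).comp (x:ℂ) ((hasDerivAt_id (x:ℂ)).const_mul τ)).congr_deriv (by ring)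
  exact h.comp_ofReal

private lemma idw3 (f f1 f2 f3 : ℝ → ℂ)
    (h1 : ∀ x, HasDerivAt f (f1 x) x) (h2 : ∀ x, HasDerivAt f1 (f2 x) x)
    (h3 : ∀ x, HasDerivAt f2 (f3 x) x) :
    iteratedDerivWithin 3 f (Set.Icc 0 1) 1 = f3 1 := by
  have us : UniqueDiffOn ℝ (Set.Icc (0:ℝ) 1) := uniqueDiffOn_Icc one_pos
  have hmem : (1:ℝ) ∈ Set.Icc (0:ℝ) 1 := by norm_num
  have e1 : Set.EqOn (derivWithin f (Set.Icc 0 1)) f1 (Set.Icc 0 1) :=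
    fun y hy => (h1 y).hasDerivWithinAt.derivWithin (us y hy)
  have e2 : Set.EqOn (derivWithin f1 (Set.Icc 0 1)) f2 (Set.Icc 0 1) :=
    fun y hy => (h2 y).hasDerivWithinAt.derivWithin (us y hy)
  rw [iteratedDerivWithin_succ']
  rw [iteratedDerivWithin_congr e1 hmem]
  rw [iteratedDerivWithin_succ']
  rw [iteratedDerivWithin_congr e2 hmem]
  rw [iteratedDerivWithin_succ', iteratedDerivWithin_zero]
  exact (h3 1).hasDerivWithinAt.derivWithin (us 1 hmem)

/-- for `τ` satisfying the tip-mass characteristic equation, the explicit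
eigenfunction `φ` of the observer-error operator satisfies `α φ(1) − β φ'''(1) = 2K`
with the explicit constant `K`. -/
theorem stmt_19 (c γ m α β : ℝ) (hc : 0 < c) (hγ : 0 < γ) (hm : 0 < m)
    (hα : 0 < α) (hβ : 0 < β)
    (τ : ℂ) (hne : Complex.I * (c : ℂ) * τ ^ 2 + (γ : ℂ) ≠ 0)
    (hchar : 2 * (m : ℂ) * τ ^ 2 * Complex.sinh τ * Complex.sin τ
        + τ * (Complex.cosh τ * Complex.sin τ - Complex.sinh τ * Complex.cos τ)
      = (Complex.I * (c : ℂ) * τ ^ 2 + (γ : ℂ))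
          * (1 + Complex.cosh τ * Complex.cos τ
            - (m : ℂ) * τ * (Complex.cosh τ * Complex.sin τ
              - Complex.sinh τ * Complex.cos τ)))
    (φ : ℝ → ℂ)
    (hφ : ∀ x : ℝ, φ x =
      (Complex.sinh τ + Complex.sin τ)
          * (Complex.cosh (τ * (x : ℂ)) - Complex.cos (τ * (x : ℂ)))
        + (2 * τ * Complex.sin τ / (Complex.I * (c : ℂ) * τ ^ 2 + (γ : ℂ))
            - (Complex.cosh τ + Complex.cos τ)) * Complex.sinh (τ * (x : ℂ))
        + ((Complex.cosh τ + Complex.cos τ)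
            + 2 * τ * Complex.sinh τ / (Complex.I * (c : ℂ) * τ ^ 2 + (γ : ℂ)))
            * Complex.sin (τ * (x : ℂ)))
    (K : ℂ)
    (hK : K = ((α : ℂ) * (Complex.cosh τ * Complex.sin τ - Complex.sinh τ * Complex.cos τ)
        + (β : ℂ) * τ ^ 3 * (1 + Complex.cosh τ * Complex.cos τ))
      + (τ / (Complex.I * (c : ℂ) * τ ^ 2 + (γ : ℂ)))
          * (2 * (α : ℂ) * Complex.sinh τ * Complex.sin τ
            - (β : ℂ) * τ ^ 3 * (Complex.cosh τ * Complex.sin τ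
              - Complex.sinh τ * Complex.cos τ))) :
    (α : ℂ) * φ 1 - (β : ℂ) * iteratedDerivWithin 3 φ (Set.Icc 0 1) 1 = 2 * K := by
  set A : ℂ := Complex.sinh τ + Complex.sin τ with hA
  set B : ℂ := 2 * τ * Complex.sin τ / (Complex.I * (c : ℂ) * τ ^ 2 + (γ : ℂ))
      - (Complex.cosh τ + Complex.cos τ) with hB
  set C : ℂ := (Complex.cosh τ + Complex.cos τ)
      + 2 * τ * Complex.sinh τ / (Complex.I * (c : ℂ) * τ ^ 2 + (γ : ℂ)) with hC
  have hφ' : φ = fun x : ℝ =>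
      A * (Complex.cosh (τ * x) - Complex.cos (τ * x))
        + B * Complex.sinh (τ * x) + C * Complex.sin (τ * x) := funext hφ
  subst hφ'
  have p1 : ∀ x : ℝ, HasDerivAt
      (fun x : ℝ => A * (Complex.cosh (τ * x) - Complex.cos (τ * x))
        + B * Complex.sinh (τ * x) + C * Complex.sin (τ * x))
      (A * (τ * Complex.sinh (τ * x) + τ * Complex.sin (τ * x))
        + B * (τ * Complex.cosh (τ * x)) + C * (τ * Complex.cos (τ * x))) x := by
    intro x
    have := ((((hd_cosh τ x).sub (hd_cos τ x)).const_mul A).add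
      ((hd_sinh τ x).const_mul B)).add ((hd_sin τ x).const_mul C)
    exact this.congr_deriv (by ring)
  have p2 : ∀ x : ℝ, HasDerivAt
      (fun x : ℝ => A * (τ * Complex.sinh (τ * x) + τ * Complex.sin (τ * x))
        + B * (τ * Complex.cosh (τ * x)) + C * (τ * Complex.cos (τ * x)))
      (A * (τ^2 * Complex.cosh (τ * x) + τ^2 * Complex.cos (τ * x))
        + B * (τ^2 * Complex.sinh (τ * x)) - C * (τ^2 * Complex.sin (τ * x))) x := by
    intro x
    have h := ((((hd_sinh τ x).add (hd_sin τ x)).const_mul (A * τ)).add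
      ((hd_cosh τ x).const_mul (B * τ))).add ((hd_cos τ x).const_mul (C * τ))
    have hfun : (fun x : ℝ => A * (τ * Complex.sinh (τ * x) + τ * Complex.sin (τ * x))
        + B * (τ * Complex.cosh (τ * x)) + C * (τ * Complex.cos (τ * x)))
        = (fun x : ℝ => A * τ * (Complex.sinh (τ * x) + Complex.sin (τ * x))
          + B * τ * Complex.cosh (τ * x) + C * τ * Complex.cos (τ * x)) := by
      funext y; ring
    rw [hfun]
    exact h.congr_deriv (by ring)
  have p3 : ∀ x : ℝ, HasDerivAt
      (fun x : ℝ => A * (τ^2 * Complex.cosh (τ * x) + τ^2 * Complex.cos (τ * x))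
        + B * (τ^2 * Complex.sinh (τ * x)) - C * (τ^2 * Complex.sin (τ * x)))
      (A * (τ^3 * Complex.sinh (τ * x) - τ^3 * Complex.sin (τ * x))
        + B * (τ^3 * Complex.cosh (τ * x)) - C * (τ^3 * Complex.cos (τ * x))) x := by
    intro x
    have h := ((((hd_cosh τ x).add (hd_cos τ x)).const_mul (A * τ^2)).add
      ((hd_sinh τ x).const_mul (B * τ^2))).sub ((hd_sin τ x).const_mul (C * τ^2))
    have hfun : (fun x : ℝ => A * (τ^2 * Complex.cosh (τ * x) + τ^2 * Complex.cos (τ * x))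
        + B * (τ^2 * Complex.sinh (τ * x)) - C * (τ^2 * Complex.sin (τ * x)))
        = (fun x : ℝ => A * τ^2 * (Complex.cosh (τ * x) + Complex.cos (τ * x))
          + B * τ^2 * Complex.sinh (τ * x) - C * τ^2 * Complex.sin (τ * x)) := by
      funext y; ring
    rw [hfun]
    exact h.congr_deriv (by ring)
  have h3 := idw3 _ _ _ _ p1 p2 p3
  rw [h3, hK, hA, hB, hC]
  push_cast
  rw [mul_one]
  have h1 := Complex.cosh_sq_sub_sinh_sq τ
  have h2 := Complex.sin_sq_add_cos_sq τ
  linear_combination ((β:ℂ) * τ^3) * h1 + ((β:ℂ) * τ^3) * h2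
end
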